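/- Suppose b k * c (k + 1) < 0 for all k : ZMod p, and (−1)^p * ∏_{k : ZMod p} b k ≠ ∏_{k : ZMod p} c k. Then every absolute nilpotent element x of E^n_{π,τ} satisfies x (l k) = 0 for all k : ZMod p. -/

import Mathlib

/-!
Evaluating `x * x = 0` at the coordinate `π (l k) = τ (l (k + 1))` gives the cyclic recurrence
`x (l k) ^ 2 * b k + x (l (k + 1)) ^ 2 * c (k + 1) = 0`. Multiplying it over the whole cycle gives
`∏ c * ∏ x (l k) ^ 2 = (-1) ^ p * ∏ b * ∏ x (l k) ^ 2`, so the product condition forces some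
`x (l k)` to vanish, and since every `c k ≠ 0` the recurrence carries this zero around the cycle.
-/

open Finset

/-- The product of the evolution algebra `E_{π,τ}(a)` on a finite type `ι`. -/
noncomputable def evolMul {ι : Type*} [Fintype ι] [DecidableEq ι]
    (π τ : Equiv.Perm ι) (a : ι → ι → ℝ) (x y : ι → ℝ) : ι → ℝ :=
  fun j => ∑ i, x i * y i *
    ((if π i = j then a i (π i) else 0) + (if τ i = j then a i (τ i) else 0))

theorem evolMul_apply {ι : Type*} [Fintype ι] [DecidableEq ι]
    (π τ : Equiv.Perm ι) (a : ι → ι → ℝ) (x y : ι → ℝ) (j : ι) :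
    evolMul π τ a x y j = x (π⁻¹ j) * y (π⁻¹ j) * a (π⁻¹ j) j
      + x (τ⁻¹ j) * y (τ⁻¹ j) * a (τ⁻¹ j) j := by
  simp [evolMul, mul_add, sum_add_distrib, ← Equiv.Perm.eq_inv_iff_eq]

namespace ZMod

variable {p : ℕ} [NeZero p]

theorem forall_of_add_one {P : ZMod p → Prop} (hP : ∀ k, P k → P (k + 1)) {k₀ : ZMod p}
    (h₀ : P k₀) (k : ZMod p) : P k := by
  have h : ∀ m : ℕ, P (k₀ + m) := fun m => by
    induction m with
    | zero => simpa using h₀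
    | succ m ih => simpa [add_assoc] using hP _ ih
  simpa using h (k - k₀).val

variable {R : Type*} [CommRing R]

theorem prod_mul_prod_eq_of_mul_add_mul_add_one_eq_zero {u b c : ZMod p → R}
    (h : ∀ k, u k * b k + u (k + 1) * c (k + 1) = 0) :
    (∏ k, c k) * ∏ k, u k = (-1) ^ p * (∏ k, b k) * ∏ k, u k := by
  calc (∏ k, c k) * ∏ k, u k = ∏ k, u (k + 1) * c (k + 1) := by
        rw [← prod_mul_distrib, ← Equiv.prod_comp (Equiv.addRight 1)]
        simp [mul_comm]
    _ = ∏ k, (-1) * b k * u k := by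
        congr! 1 with k
        linear_combination h k
    _ = (-1) ^ p * (∏ k, b k) * ∏ k, u k := by
        rw [prod_mul_distrib, prod_mul_distrib, prod_const, card_univ, ZMod.card]

theorem eq_zero_of_mul_add_mul_add_one_eq_zero [IsDomain R] {u b c : ZMod p → R}
    (h : ∀ k, u k * b k + u (k + 1) * c (k + 1) = 0) (hc : ∀ k, c k ≠ 0)
    (hprod : (-1) ^ p * ∏ k, b k ≠ ∏ k, c k) (k : ZMod p) : u k = 0 := by
  have hu : ∏ k, u k = 0 := by
    by_contra hu
    exact hprod (mul_right_cancel₀ hu (prod_mul_prod_eq_of_mul_add_mul_add_one_eq_zero h).symm)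
  obtain ⟨k₀, -, hk₀⟩ := prod_eq_zero_iff.mp hu
  refine forall_of_add_one (P := (u · = 0)) (fun k hk => ?_) hk₀ k
  have := h k
  rw [hk, zero_mul, zero_add, mul_eq_zero] at this
  exact this.resolve_right (hc _)

end ZMod

theorem stmt_8_general (n p : ℕ) [NeZero p] (π τ : Equiv.Perm (Fin n))
    (a : Fin n → Fin n → ℝ)
    (l : ZMod p → Fin n)
    (hcyc : ∀ k : ZMod p, τ⁻¹ (π (l k)) = l (k + 1))
    (b c : ZMod p → ℝ)
    (hb : ∀ k, b k = a (l k) (π (l k)))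
    (hc : ∀ k, c k = a (l k) (τ (l k)))
    (hbc : ∀ k : ZMod p, b k * c (k + 1) < 0)
    (hprod : (-1 : ℝ) ^ p * ∏ k : ZMod p, b k ≠ ∏ k : ZMod p, c k) :
    ∀ x : Fin n → ℝ, evolMul π τ a x x = 0 → ∀ k : ZMod p, x (l k) = 0 := by
  intro x hx
  have hc0 (k : ZMod p) : c k ≠ 0 := by
    simpa using right_ne_zero_of_mul (hbc (k - 1)).ne
  have hrec (k : ZMod p) : x (l k) ^ 2 * b k + x (l (k + 1)) ^ 2 * c (k + 1) = 0 := by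
    have hτ : τ (l (k + 1)) = π (l k) := by rw [← hcyc]; simp
    have := congrFun hx (π (l k))
    rw [evolMul_apply, hcyc] at this
    simp only [Equiv.Perm.coe_inv, Equiv.symm_apply_apply, Pi.zero_apply] at this
    rw [hb, hc, hτ]
    linear_combination this
  exact fun k => pow_eq_zero_iff two_ne_zero |>.mp
    (ZMod.eq_zero_of_mul_add_mul_add_one_eq_zero hrec hc0 hprod k)

/-- along a cycle `l : ZMod p → Fin n` of `τ⁻¹ ∘ π`, if
`b k * c (k+1) < 0` for all `k` and `(−1)^p * ∏ b k ≠ ∏ c k`, then every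
absolute nilpotent element `x` of `E^n_{π,τ}` vanishes at all the `l k`. -/
theorem stmt_8 (n p : ℕ) [NeZero p] (π τ : Equiv.Perm (Fin n))
    (a : Fin n → Fin n → ℝ)
    (l : ZMod p → Fin n) (hl : Function.Injective l)
    (hcyc : ∀ k : ZMod p, τ⁻¹ (π (l k)) = l (k + 1))
    (b c : ZMod p → ℝ)
    (hb : ∀ k, b k = a (l k) (π (l k)))
    (hc : ∀ k, c k = a (l k) (τ (l k)))
    (hbc : ∀ k : ZMod p, b k * c (k + 1) < 0)
    (hprod : (-1 : ℝ) ^ p * ∏ k : ZMod p, b k ≠ ∏ k : ZMod p, c k) :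
    ∀ x : Fin n → ℝ, evolMul π τ a x x = 0 → ∀ k : ZMod p, x (l k) = 0 :=
  stmt_8_general n p π τ a l hcyc b c hb hc hbc hprod
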